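/- Let L be a pairwise loss function that is Lipschitz continuous with constant |L|₁ and convex in its fifth argument, let H be a separable real Hilbert space, Φ : X×X → H measurable with ‖k‖_∞ := sup ‖Φ(x,x')‖_H < ∞. Then for all λ > 0, all ε ∈ (0,1), and all Borel probability measures P, Q on X×Y, setting P_ε := (1−ε)·P + ε·Q, the minimizers of the regularized shifted risk satisfy ‖f_{L*,P,λ} − f_{L*,P_ε,λ}‖_H ≤ (8/λ)·‖k‖_∞·|L|₁·ε. -/

import Mathlib

open MeasureTheory

/-- The function on `X × X` induced by an element `f` of the RKHS with feature map `Φ`: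
`f̂(x,x') = ⟪f, Φ(x,x')⟫_H` (reproducing property). -/
noncomputable def fhat {X H : Type*} [NormedAddCommGroup H] [InnerProductSpace ℝ H]
    (Φ : X × X → H) (f : H) : X × X → ℝ :=
  fun p => @inner ℝ H _ f (Φ p)

/-- The shifted risk `R_{L*,P}(f) = ∫ L(x,y,x',y',f(x,x')) - L(x,y,x',y',0) d(P⊗P)`. -/
noncomputable def shiftedRisk {X Y : Type*} [MeasurableSpace X] [MeasurableSpace Y]
    (L : X → Y → X → Y → ℝ → ℝ) (P : Measure (X × Y)) (f : X × X → ℝ) : ℝ :=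
  ∫ z : (X × Y) × (X × Y),
    (L z.1.1 z.1.2 z.2.1 z.2.2 (f (z.1.1, z.2.1)) - L z.1.1 z.1.2 z.2.1 z.2.2 0) ∂(P.prod P)

/-- The regularized shifted risk `R^reg_{L*,P,λ}(f) = R_{L*,P}(f̂) + λ‖f‖²` for `f ∈ H`. -/
noncomputable def regRisk {X Y H : Type*} [MeasurableSpace X] [MeasurableSpace Y]
    [NormedAddCommGroup H] [InnerProductSpace ℝ H]
    (L : X → Y → X → Y → ℝ → ℝ) (Φ : X × X → H) (P : Measure (X × Y))
    (lam : ℝ) (f : H) : ℝ :=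
  shiftedRisk L P (fhat Φ f) + lam * ‖f‖ ^ 2

/-!
Adding `λ‖·‖²` to a convex risk `R` makes it `2λ`-strongly convex, so a minimizer `f₀` satisfies
`λ‖f₀ - g‖² ≤ 2 (R^reg(g) - R^reg(f₀))`. For the two minimizers the norm terms cancel, and
`λ‖f_P - f_{P_ε}‖²` is bounded by `∫ h d(P⊗P) - ∫ h d(P_ε⊗P_ε)`, where
`h := L*(f̂_{P_ε}) - L*(f̂_P)`. Since `|h| ≤ |L|₁ ‖k‖_∞ ‖f_P - f_{P_ε}‖` and `P_ε⊗P_ε` agrees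
with `P⊗P` up to mass `1 - (1 - ε)² ≤ 2ε`, dividing by `‖f_P - f_{P_ε}‖` gives the bound.
-/

theorem le_div_of_mul_sq_le_mul {lam d K : ℝ} (hlam : 0 < lam) (hd : 0 ≤ d) (hK : 0 ≤ K)
    (h : lam * d ^ 2 ≤ K * d) : d ≤ K / lam := by
  rcases hd.eq_or_lt with rfl | hd
  · positivity
  rw [le_div_iff₀' hlam]
  nlinarith

section StrongConvexity

variable {E : Type*} [NormedAddCommGroup E] [InnerProductSpace ℝ E]

theorem mul_sq_norm_sub_le_of_forall_le_add_mul_sq_norm {R : E → ℝ}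
    (hR : ConvexOn ℝ Set.univ R) {lam : ℝ} {f₀ : E}
    (hmin : ∀ g, R f₀ + lam * ‖f₀‖ ^ 2 ≤ R g + lam * ‖g‖ ^ 2) (g : E) :
    lam * ‖f₀ - g‖ ^ 2 ≤ 2 * (R g + lam * ‖g‖ ^ 2 - (R f₀ + lam * ‖f₀‖ ^ 2)) := by
  have hmid := hmin ((1 / 2 : ℝ) • f₀ + (1 / 2 : ℝ) • g)
  have hconv := hR.2 (Set.mem_univ f₀) (Set.mem_univ g) (by norm_num : (0 : ℝ) ≤ 1 / 2)
    (by norm_num : (0 : ℝ) ≤ 1 / 2) (by norm_num)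
  have hnorm : ‖(1 / 2 : ℝ) • f₀ + (1 / 2 : ℝ) • g‖ ^ 2 = ‖f₀ + g‖ ^ 2 / 4 := by
    rw [← smul_add, norm_smul, mul_pow, Real.norm_of_nonneg (by norm_num)]
    ring
  have hpar := parallelogram_law_with_norm ℝ f₀ g
  rw [hnorm] at hmid
  simp only [smul_eq_mul] at hconv
  linear_combination 4 * hmid + 4 * hconv + lam * hpar

theorem mul_sq_norm_sub_le_of_two_minimizers {R₁ R₂ : E → ℝ} (hR₁ : ConvexOn ℝ Set.univ R₁)
    (hR₂ : ConvexOn ℝ Set.univ R₂) {lam : ℝ} {f₁ f₂ : E}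
    (hmin₁ : ∀ g, R₁ f₁ + lam * ‖f₁‖ ^ 2 ≤ R₁ g + lam * ‖g‖ ^ 2)
    (hmin₂ : ∀ g, R₂ f₂ + lam * ‖f₂‖ ^ 2 ≤ R₂ g + lam * ‖g‖ ^ 2) :
    lam * ‖f₁ - f₂‖ ^ 2 ≤ (R₁ f₂ - R₁ f₁) - (R₂ f₂ - R₂ f₁) := by
  have h₁ := mul_sq_norm_sub_le_of_forall_le_add_mul_sq_norm hR₁ hmin₁ f₂
  have h₂ := mul_sq_norm_sub_le_of_forall_le_add_mul_sq_norm hR₂ hmin₂ f₁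
  rw [norm_sub_rev] at h₂
  linarith

end StrongConvexity

section Contamination

variable {α : Type*} [MeasurableSpace α]

theorem isProbabilityMeasure_ofReal_smul_add (μ ν : Measure α) [IsProbabilityMeasure μ]
    [IsProbabilityMeasure ν] {ε : ℝ} (hε0 : 0 ≤ ε) (hε1 : ε ≤ 1) :
    IsProbabilityMeasure (ENNReal.ofReal (1 - ε) • μ + ENNReal.ofReal ε • ν) := by
  constructor
  simp only [Measure.coe_add, Pi.add_apply, Measure.smul_apply, smul_eq_mul, measure_univ,
    mul_one]
  rw [← ENNReal.ofReal_add (by linarith) hε0]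
  norm_num

theorem abs_integral_sub_integral_le_of_abs_le (μ ν : Measure α) [IsProbabilityMeasure μ]
    [IsProbabilityMeasure ν] {h : α → ℝ} {M : ℝ} (hM : ∀ x, |h x| ≤ M) :
    |∫ x, h x ∂μ - ∫ x, h x ∂ν| ≤ 2 * M := by
  have hbound : ∀ (m : Measure α) [IsProbabilityMeasure m], |∫ x, h x ∂m| ≤ M := fun m _ => by
    simpa using norm_integral_le_of_norm_le_const (μ := m) (f := h)
      (Filter.Eventually.of_forall fun x => by simpa using hM x)
  linarith [abs_sub (∫ x, h x ∂μ) (∫ x, h x ∂ν), hbound μ, hbound ν]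

theorem integral_prod_ofReal_smul_add (μ ν : Measure α) [IsFiniteMeasure μ] [IsFiniteMeasure ν]
    {a b : ℝ} (ha : 0 ≤ a) (hb : 0 ≤ b) {h : α × α → ℝ}
    (hint : ∀ (m : Measure (α × α)) [IsFiniteMeasure m], Integrable h m) :
    ∫ z, h z ∂((ENNReal.ofReal a • μ + ENNReal.ofReal b • ν).prod
        (ENNReal.ofReal a • μ + ENNReal.ofReal b • ν))
      = a * a * ∫ z, h z ∂(μ.prod μ) + a * b * ∫ z, h z ∂(μ.prod ν)
        + (b * a * ∫ z, h z ∂(ν.prod μ) + b * b * ∫ z, h z ∂(ν.prod ν)) := by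
  have : IsFiniteMeasure (ENNReal.ofReal a • μ) := μ.smul_finite ENNReal.ofReal_ne_top
  have : IsFiniteMeasure (ENNReal.ofReal b • ν) := ν.smul_finite ENNReal.ofReal_ne_top
  rw [Measure.add_prod, integral_add_measure (hint _) (hint _), Measure.prod_add,
    Measure.prod_add, integral_add_measure (hint _) (hint _),
    integral_add_measure (hint _) (hint _)]
  simp only [Measure.prod_smul_left, Measure.prod_smul_right, integral_smul_measure,
    ENNReal.toReal_ofReal ha, ENNReal.toReal_ofReal hb, smul_eq_mul]
  ring

theorem abs_integral_prod_sub_integral_prod_ofReal_smul_add_le (μ ν : Measure α)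
    [IsProbabilityMeasure μ] [IsProbabilityMeasure ν] {ε : ℝ} (hε0 : 0 ≤ ε) (hε1 : ε ≤ 1)
    {h : α × α → ℝ} (hint : ∀ (m : Measure (α × α)) [IsFiniteMeasure m], Integrable h m)
    {M : ℝ} (hM : ∀ z, |h z| ≤ M) :
    |∫ z, h z ∂(μ.prod μ) - ∫ z, h z ∂((ENNReal.ofReal (1 - ε) • μ + ENNReal.ofReal ε • ν).prod
        (ENNReal.ofReal (1 - ε) • μ + ENNReal.ofReal ε • ν))| ≤ 2 * (1 - (1 - ε) ^ 2) * M := by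
  rw [integral_prod_ofReal_smul_add μ ν (by linarith) hε0 hint]
  have hμν := abs_integral_sub_integral_le_of_abs_le (μ.prod μ) (μ.prod ν) hM
  have hνμ := abs_integral_sub_integral_le_of_abs_le (μ.prod μ) (ν.prod μ) hM
  have hνν := abs_integral_sub_integral_le_of_abs_le (μ.prod μ) (ν.prod ν) hM
  set I := ∫ z, h z ∂(μ.prod μ)
  have hw : 0 ≤ (1 - ε) * ε := mul_nonneg (by linarith) hε0
  calc |I - ((1 - ε) * (1 - ε) * I + (1 - ε) * ε * ∫ z, h z ∂(μ.prod ν)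
          + (ε * (1 - ε) * ∫ z, h z ∂(ν.prod μ) + ε * ε * ∫ z, h z ∂(ν.prod ν)))|
        = |(1 - ε) * ε * (I - ∫ z, h z ∂(μ.prod ν))
            + (1 - ε) * ε * (I - ∫ z, h z ∂(ν.prod μ))
            + ε ^ 2 * (I - ∫ z, h z ∂(ν.prod ν))| := by ring_nf
    _ ≤ (1 - ε) * ε * (2 * M) + (1 - ε) * ε * (2 * M) + ε ^ 2 * (2 * M) := by
        refine (abs_add_three _ _ _).trans ?_
        simp only [abs_mul, abs_of_nonneg hw, abs_of_nonneg (sq_nonneg ε)]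
        gcongr
    _ = 2 * (1 - (1 - ε) ^ 2) * M := by ring

end Contamination

section ShiftedLoss

variable {X Y H : Type*} [NormedAddCommGroup H] [InnerProductSpace ℝ H]
  {L : X → Y → X → Y → ℝ → ℝ} {Φ : X × X → H} {c kb : ℝ}

noncomputable def shiftedLoss (L : X → Y → X → Y → ℝ → ℝ) (f : X × X → ℝ)
    (z : (X × Y) × (X × Y)) : ℝ :=
  L z.1.1 z.1.2 z.2.1 z.2.2 (f (z.1.1, z.2.1)) - L z.1.1 z.1.2 z.2.1 z.2.2 0

theorem abs_shiftedLoss_sub_le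
    (hL_lip : ∀ x y x' y' s t, |L x y x' y' t - L x y x' y' s| ≤ c * |t - s|)
    (f g : X × X → ℝ) (z : (X × Y) × (X × Y)) :
    |shiftedLoss L f z - shiftedLoss L g z| ≤ c * |f (z.1.1, z.2.1) - g (z.1.1, z.2.1)| := by
  simpa [shiftedLoss] using hL_lip z.1.1 z.1.2 z.2.1 z.2.2 _ _

theorem fhat_add_smul (a b : ℝ) (f g : H) (p : X × X) :
    fhat Φ (a • f + b • g) p = a * fhat Φ f p + b * fhat Φ g p := by
  simp only [fhat, inner_add_left, real_inner_smul_left]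

theorem abs_fhat_sub_le (hkb : ∀ p, ‖Φ p‖ ≤ kb) (f g : H) (p : X × X) :
    |fhat Φ f p - fhat Φ g p| ≤ kb * ‖f - g‖ := by
  rw [fhat, fhat, ← inner_sub_left, mul_comm]
  exact (abs_real_inner_le_norm _ _).trans (by gcongr; exact hkb p)

theorem abs_shiftedLoss_fhat_sub_le (hc : 0 ≤ c)
    (hL_lip : ∀ x y x' y' s t, |L x y x' y' t - L x y x' y' s| ≤ c * |t - s|)
    (hkb : ∀ p, ‖Φ p‖ ≤ kb) (f g : H) (z : (X × Y) × (X × Y)) :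
    |shiftedLoss L (fhat Φ f) z - shiftedLoss L (fhat Φ g) z| ≤ c * kb * ‖f - g‖ := by
  rw [mul_assoc]
  exact (abs_shiftedLoss_sub_le hL_lip _ _ z).trans
    (by gcongr; exact abs_fhat_sub_le hkb f g _)

variable [MeasurableSpace X] [MeasurableSpace Y]

theorem shiftedRisk_eq_integral_shiftedLoss (P : Measure (X × Y)) (f : X × X → ℝ) :
    shiftedRisk L P f = ∫ z, shiftedLoss L f z ∂(P.prod P) :=
  rfl

theorem measurable_shiftedLoss
    (hL_meas : Measurable fun p : (X × Y) × (X × Y) × ℝ => L p.1.1 p.1.2 p.2.1.1 p.2.1.2 p.2.2)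
    {f : X × X → ℝ} (hf : Measurable f) : Measurable (shiftedLoss L f) := by
  have hpair : Measurable fun z : (X × Y) × (X × Y) => (z.1.1, z.2.1) := by fun_prop
  exact (hL_meas.comp (measurable_fst.prodMk (measurable_snd.prodMk (hf.comp hpair)))).sub
    (hL_meas.comp (measurable_fst.prodMk (measurable_snd.prodMk measurable_const)))

theorem measurable_fhat [MeasurableSpace H] [BorelSpace H] (hΦ : Measurable Φ) (f : H) :
    Measurable (fhat Φ f) :=
  (continuous_const.inner continuous_id).measurable.comp hΦ

theorem integrable_shiftedLoss_fhat [MeasurableSpace H] [BorelSpace H]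
    (hL_meas : Measurable fun p : (X × Y) × (X × Y) × ℝ => L p.1.1 p.1.2 p.2.1.1 p.2.1.2 p.2.2)
    (hc : 0 ≤ c) (hL_lip : ∀ x y x' y' s t, |L x y x' y' t - L x y x' y' s| ≤ c * |t - s|)
    (hΦ : Measurable Φ) (hkb : ∀ p, ‖Φ p‖ ≤ kb) (f : H)
    (μ : Measure ((X × Y) × (X × Y))) [IsFiniteMeasure μ] :
    Integrable (shiftedLoss L (fhat Φ f)) μ := by
  refine .of_bound
    (measurable_shiftedLoss hL_meas (measurable_fhat hΦ f)).aestronglyMeasurable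
    (c * kb * ‖f - 0‖) (Filter.Eventually.of_forall fun z => ?_)
  simpa [shiftedLoss, fhat] using abs_shiftedLoss_fhat_sub_le hc hL_lip hkb f 0 z

theorem convexOn_shiftedRisk_fhat [MeasurableSpace H] [BorelSpace H]
    (hL_meas : Measurable fun p : (X × Y) × (X × Y) × ℝ => L p.1.1 p.1.2 p.2.1.1 p.2.1.2 p.2.2)
    (hL_convex : ∀ x y x' y', ConvexOn ℝ Set.univ (L x y x' y'))
    (hc : 0 ≤ c) (hL_lip : ∀ x y x' y' s t, |L x y x' y' t - L x y x' y' s| ≤ c * |t - s|)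
    (hΦ : Measurable Φ) (hkb : ∀ p, ‖Φ p‖ ≤ kb) (P : Measure (X × Y)) [IsFiniteMeasure P] :
    ConvexOn ℝ Set.univ fun f : H => shiftedRisk L P (fhat Φ f) := by
  refine ⟨convex_univ, fun f _ g _ a b ha hb hab => ?_⟩
  have hint := integrable_shiftedLoss_fhat hL_meas hc hL_lip hΦ hkb (μ := P.prod P)
  have hpoint : ∀ z, shiftedLoss L (fhat Φ (a • f + b • g)) z
      ≤ a * shiftedLoss L (fhat Φ f) z + b * shiftedLoss L (fhat Φ g) z := fun z => by
    have hL := (hL_convex z.1.1 z.1.2 z.2.1 z.2.2).2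
      (Set.mem_univ (fhat Φ f (z.1.1, z.2.1))) (Set.mem_univ (fhat Φ g (z.1.1, z.2.1))) ha hb hab
    simp only [smul_eq_mul] at hL
    simp only [shiftedLoss, fhat_add_smul]
    linear_combination hL + L z.1.1 z.1.2 z.2.1 z.2.2 0 * hab
  simp only [shiftedRisk_eq_integral_shiftedLoss, smul_eq_mul]
  rw [← integral_const_mul, ← integral_const_mul,
    ← integral_add ((hint f).const_mul a) ((hint g).const_mul b)]
  exact integral_mono (hint _) (((hint f).const_mul a).add ((hint g).const_mul b)) hpoint

end ShiftedLoss

theorem bias_bound_general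
    {X Y H : Type*} [MeasurableSpace X] [MeasurableSpace Y]
    [NormedAddCommGroup H] [InnerProductSpace ℝ H]
    [MeasurableSpace H] [BorelSpace H]
    (L : X → Y → X → Y → ℝ → ℝ)
    (hL_meas : Measurable fun p : (X × Y) × (X × Y) × ℝ => L p.1.1 p.1.2 p.2.1.1 p.2.1.2 p.2.2)
    (hL_convex : ∀ x y x' y', ConvexOn ℝ Set.univ (L x y x' y'))
    (c : ℝ) (hc : 0 ≤ c)
    (hL_lip : ∀ x y x' y' s t, |L x y x' y' t - L x y x' y' s| ≤ c * |t - s|)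
    (Φ : X × X → H) (hΦ : Measurable Φ)
    (kb : ℝ) (hkb : ∀ p : X × X, ‖Φ p‖ ≤ kb)
    (lam : ℝ) (hlam : 0 < lam)
    (ε : ℝ) (hε0 : 0 < ε) (hε1 : ε < 1)
    (P Q : Measure (X × Y)) [IsProbabilityMeasure P] [IsProbabilityMeasure Q]
    (fP fPε : H)
    (hfP : ∀ g : H, regRisk L Φ P lam fP ≤ regRisk L Φ P lam g)
    (hfPε : ∀ g : H,
      regRisk L Φ (ENNReal.ofReal (1 - ε) • P + ENNReal.ofReal ε • Q) lam fPε
        ≤ regRisk L Φ (ENNReal.ofReal (1 - ε) • P + ENNReal.ofReal ε • Q) lam g) :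
    ‖fP - fPε‖ ≤ (8 / lam) * kb * c * ε := by
  obtain ⟨x, _⟩ := (nonempty_of_isProbabilityMeasure P).some
  have hkb0 : 0 ≤ kb := (norm_nonneg _).trans (hkb (x, x))
  have : IsProbabilityMeasure (ENNReal.ofReal (1 - ε) • P + ENNReal.ofReal ε • Q) :=
    isProbabilityMeasure_ofReal_smul_add P Q hε0.le hε1.le
  have hconv := convexOn_shiftedRisk_fhat hL_meas hL_convex hc hL_lip hΦ hkb
  have hstab := mul_sq_norm_sub_le_of_two_minimizers (hconv P) (hconv _) hfP hfPε
  have hint := integrable_shiftedLoss_fhat hL_meas hc hL_lip hΦ hkb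
  have hrisk_sub : ∀ (μ : Measure (X × Y)) [IsFiniteMeasure μ],
      shiftedRisk L μ (fhat Φ fPε) - shiftedRisk L μ (fhat Φ fP)
        = ∫ z, (shiftedLoss L (fhat Φ fPε) z - shiftedLoss L (fhat Φ fP) z) ∂(μ.prod μ) :=
    fun μ _ => (integral_sub (hint _ _) (hint _ _)).symm
  have hmix := abs_integral_prod_sub_integral_prod_ofReal_smul_add_le P Q hε0.le hε1.le
    (h := fun z => shiftedLoss L (fhat Φ fPε) z - shiftedLoss L (fhat Φ fP) z)
    (fun m _ => (hint fPε m).sub (hint fP m))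
    (abs_shiftedLoss_fhat_sub_le hc hL_lip hkb fPε fP)
  rw [← hrisk_sub, ← hrisk_sub, norm_sub_rev fPε fP] at hmix
  have hKd : 0 ≤ c * kb * ‖fP - fPε‖ := by positivity
  calc ‖fP - fPε‖ ≤ 4 * ε * (c * kb) / lam := by
        refine le_div_of_mul_sq_le_mul hlam (norm_nonneg _) (by positivity) ?_
        linarith [(abs_le.mp hmix).2, mul_nonneg (sq_nonneg ε) hKd]
    _ ≤ 8 * ε * (c * kb) / lam := by gcongr; norm_num
    _ = 8 / lam * kb * c * ε := by ring

/-- **Bounds for the bias** (Theorem 3.2). Let `L` be Lipschitz with constant `|L|₁ = c` and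
convex in its fifth argument, `Φ` measurable and bounded by `‖k‖_∞ = kb`. For all `λ > 0`,
`ε ∈ (0,1)` and probability measures `P, Q`, the minimizers of the regularized shifted risk
for `P` and for `P_ε = (1-ε)P + εQ` satisfy
`‖f_{L*,P,λ} - f_{L*,P_ε,λ}‖ ≤ (8/λ) ‖k‖_∞ |L|₁ ε`. -/
theorem bias_bound
    {X Y H : Type*} [MeasurableSpace X] [MeasurableSpace Y]
    [NormedAddCommGroup H] [InnerProductSpace ℝ H] [CompleteSpace H]
    [TopologicalSpace.SeparableSpace H] [MeasurableSpace H] [BorelSpace H]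
    (L : X → Y → X → Y → ℝ → ℝ)
    (hL_meas : Measurable fun p : (X × Y) × (X × Y) × ℝ => L p.1.1 p.1.2 p.2.1.1 p.2.1.2 p.2.2)
    (hL_nonneg : ∀ x y x' y' t, 0 ≤ L x y x' y' t)
    (hL_convex : ∀ x y x' y', ConvexOn ℝ Set.univ (L x y x' y'))
    (c : ℝ) (hc : 0 ≤ c)
    (hL_lip : ∀ x y x' y' s t, |L x y x' y' t - L x y x' y' s| ≤ c * |t - s|)
    (Φ : X × X → H) (hΦ : Measurable Φ)
    (kb : ℝ) (hkb : ∀ p : X × X, ‖Φ p‖ ≤ kb)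
    (lam : ℝ) (hlam : 0 < lam)
    (ε : ℝ) (hε0 : 0 < ε) (hε1 : ε < 1)
    (P Q : Measure (X × Y)) [IsProbabilityMeasure P] [IsProbabilityMeasure Q]
    (fP fPε : H)
    (hfP : ∀ g : H, regRisk L Φ P lam fP ≤ regRisk L Φ P lam g)
    (hfPε : ∀ g : H,
      regRisk L Φ (ENNReal.ofReal (1 - ε) • P + ENNReal.ofReal ε • Q) lam fPε
        ≤ regRisk L Φ (ENNReal.ofReal (1 - ε) • P + ENNReal.ofReal ε • Q) lam g) :
    ‖fP - fPε‖ ≤ (8 / lam) * kb * c * ε :=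
  bias_bound_general L hL_meas hL_convex c hc hL_lip Φ hΦ kb hkb lam hlam ε hε0 hε1 P Q fP fPε hfP
    hfPε
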